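/- arXiv:2209.06411 — 2 statements merged into one kernel-verified Lean document; each statement's English description precedes it below -/
import Mathlib

section
/- Let x be a random vector, and let n be noise with coordinates n_i that are mean-zero, pairwise independent, and independent of x. Let J ⊆ {1,…,d} be a fixed index set with complement J^c. Let f be any measurable function of the restricted observation y_J = x_J + n_J. Then E[‖f(y_J) − y_{J^c}‖²] = E[‖f(y_J) − x_{J^c}‖²] + Σ_{i∈J^c} Var(n_i). (Theorem 1 of Noise2SR.) -/
open MeasureTheory ProbabilityTheory

/-!
Coordinatewise, `f(y_J)_i - y_i = (f(y_J)_i - x_i) - n_i`. The first term is a function of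
`(x, n_J)`, hence independent of the centred noise `n_i` for `i ∈ Jᶜ`, so the cross term in the
expansion of the square has zero mean and the two second moments add up.
-/

lemma integral_sub_sq_eq_add_variance_of_indepFun {Ω : Type*} [MeasurableSpace Ω]
    {μ : Measure Ω} {G N : Ω → ℝ}
    (hG : MemLp G 2 μ) (hN : MemLp N 2 μ) (hGN : IndepFun G N μ) (hN0 : μ[N] = 0) :
    ∫ ω, (G ω - N ω) ^ 2 ∂μ = ∫ ω, G ω ^ 2 ∂μ + Var[N; μ] := by
  have hGN_int : Integrable (fun ω => G ω * N ω) μ := hG.integrable_mul hN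
  have hcross : ∫ ω, G ω * N ω ∂μ = 0 := by
    rw [hGN.integral_fun_mul_eq_mul_integral hG.aestronglyMeasurable hN.aestronglyMeasurable,
      hN0, mul_zero]
  calc ∫ ω, (G ω - N ω) ^ 2 ∂μ
      = ∫ ω, (G ω ^ 2 - 2 * (G ω * N ω) + N ω ^ 2) ∂μ := by
        congr with ω; ring
    _ = ∫ ω, G ω ^ 2 ∂μ - 2 * ∫ ω, G ω * N ω ∂μ + ∫ ω, N ω ^ 2 ∂μ := by
        have hG2 : Integrable (fun ω => G ω ^ 2) μ := hG.integrable_sq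
        have h2GN : Integrable (fun ω => 2 * (G ω * N ω)) μ := hGN_int.const_mul 2
        have hdiff : Integrable (fun ω => G ω ^ 2 - 2 * (G ω * N ω)) μ := hG2.sub h2GN
        rw [integral_add hdiff hN.integrable_sq, integral_sub hG2 h2GN,
          integral_const_mul]
    _ = ∫ ω, G ω ^ 2 ∂μ + Var[N; μ] := by
        rw [hcross, variance_of_integral_eq_zero hN.aemeasurable hN0]
        ring

theorem noise2sr_theorem1_general
    {Ω : Type*} [MeasureSpace Ω] [IsProbabilityMeasure (ℙ : Measure Ω)] {d : ℕ}
    (x n : Ω → Fin d → ℝ) (J : Finset (Fin d))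
    (f : ({i // i ∈ J} → ℝ) → ({i // i ∈ Jᶜ} → ℝ))
    (hxi : ∀ i, MemLp (fun ω => x ω i) 2 ℙ)
    (hni : ∀ i, MemLp (fun ω => n ω i) 2 ℙ)
    (hmean : ∀ i, ∫ ω, n ω i = 0)
    (hindep : IndepFun (fun ω => (x ω, fun j : {i // i ∈ J} => n ω j.1))
      (fun ω => fun j : {i // i ∈ Jᶜ} => n ω j.1) ℙ)
    (hf : Measurable f)
    (hfL2 : ∀ i : {i // i ∈ Jᶜ},
      MemLp (fun ω => f (fun j : {i // i ∈ J} => x ω j.1 + n ω j.1) i) 2 ℙ) :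
    ∫ ω, ∑ i ∈ Jᶜ.attach,
        (f (fun j : {i // i ∈ J} => x ω j.1 + n ω j.1) i - (x ω i.1 + n ω i.1)) ^ 2
      = (∫ ω, ∑ i ∈ Jᶜ.attach,
          (f (fun j : {i // i ∈ J} => x ω j.1 + n ω j.1) i - x ω i.1) ^ 2)
        + ∑ i ∈ Jᶜ, variance (fun ω => n ω i) ℙ := by
  have hresidual : ∀ i : {i // i ∈ Jᶜ},
      MemLp (fun ω => f (fun j : {i // i ∈ J} => x ω j.1 + n ω j.1) i - x ω i.1) 2 ℙ :=
    fun i => (hfL2 i).sub (hxi i.1)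
  have hcoord : ∀ i : {i // i ∈ Jᶜ},
      ∫ ω, (f (fun j : {i // i ∈ J} => x ω j.1 + n ω j.1) i - (x ω i.1 + n ω i.1)) ^ 2
        = (∫ ω, (f (fun j : {i // i ∈ J} => x ω j.1 + n ω j.1) i - x ω i.1) ^ 2)
          + variance (fun ω => n ω i.1) ℙ := by
    intro i
    have hφ : Measurable fun p : (Fin d → ℝ) × ({j // j ∈ J} → ℝ) =>
        f (fun j : {i // i ∈ J} => p.1 j.1 + p.2 j) i - p.1 i.1 := by fun_prop
    simpa only [sub_add_eq_sub_sub] using integral_sub_sq_eq_add_variance_of_indepFun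
      (hresidual i) (hni i.1) (hindep.comp hφ (measurable_pi_apply i)) (hmean i.1)
  have hobservation : ∀ i : {i // i ∈ Jᶜ}, MemLp
      (fun ω => f (fun j : {i // i ∈ J} => x ω j.1 + n ω j.1) i - (x ω i.1 + n ω i.1)) 2 ℙ :=
    fun i => (hfL2 i).sub ((hxi i.1).add (hni i.1))
  rw [integral_finsetSum _ fun i _ => (hobservation i).integrable_sq,
    integral_finsetSum _ fun i _ => (hresidual i).integrable_sq,
    ← Finset.sum_attach Jᶜ, ← Finset.sum_add_distrib]
  exact Finset.sum_congr rfl fun i _ => hcoord i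

/-- Theorem 1 of Noise2SR: with `y = x + n`, noise coordinates mean-zero,
pairwise independent, and `n_{Jᶜ}` independent of `(x, n_J)`, for any measurable `f` of the
restricted observation `y_J`,
`E[‖f(y_J) − y_{Jᶜ}‖²] = E[‖f(y_J) − x_{Jᶜ}‖²] + ∑_{i ∈ Jᶜ} Var(n_i)`. -/
theorem noise2sr_theorem1
    {Ω : Type*} [MeasureSpace Ω] [IsProbabilityMeasure (ℙ : Measure Ω)] {d : ℕ}
    (x n : Ω → Fin d → ℝ) (J : Finset (Fin d))
    (f : ({i // i ∈ J} → ℝ) → ({i // i ∈ Jᶜ} → ℝ))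
    (hxi : ∀ i, MemLp (fun ω => x ω i) 2 ℙ)
    (hni : ∀ i, MemLp (fun ω => n ω i) 2 ℙ)
    (hmean : ∀ i, ∫ ω, n ω i = 0)
    (hpair : ∀ i j, i ≠ j → IndepFun (fun ω => n ω i) (fun ω => n ω j) ℙ)
    (hindep : IndepFun (fun ω => (x ω, fun j : {i // i ∈ J} => n ω j.1))
      (fun ω => fun j : {i // i ∈ Jᶜ} => n ω j.1) ℙ)
    (hf : Measurable f)
    (hfL2 : ∀ i : {i // i ∈ Jᶜ},
      MemLp (fun ω => f (fun j : {i // i ∈ J} => x ω j.1 + n ω j.1) i) 2 ℙ) :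
    ∫ ω, ∑ i ∈ Jᶜ.attach,
        (f (fun j : {i // i ∈ J} => x ω j.1 + n ω j.1) i - (x ω i.1 + n ω i.1)) ^ 2
      = (∫ ω, ∑ i ∈ Jᶜ.attach,
          (f (fun j : {i // i ∈ J} => x ω j.1 + n ω j.1) i - x ω i.1) ^ 2)
        + ∑ i ∈ Jᶜ, variance (fun ω => n ω i) ℙ :=
  noise2sr_theorem1_general x n J f hxi hni hmean hindep hf hfL2
end

section
/- Let y₁ = x + n₁ and y₂ = x + n₂ where n₁, n₂ are mean-zero, mutually independent given x, with n₂ independent of (x, n₁). Then for any measurable f, E[‖f(y₁) − y₂‖²] = E[‖f(y₁) − x‖²] + E[‖n₂‖²]. In particular, minimizing the Noise2Noise loss E[‖f(y₁) − y₂‖²] over f yields the same minimizer as the supervised loss E[‖f(y₁) − x‖²]. -/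
/-!
Write `f(y₁) − y₂ = g − n₂` with `g = f(x + n₁) − x`. Since `g` is a measurable function of
`(x, n₁)`, it is independent of `n₂`, so `E⟪g, n₂⟫ = ⟪E g, E n₂⟫ = 0` and the cross term in
`E‖g − n₂‖²` vanishes. The Noise2Noise loss is therefore the supervised loss plus the constant
`E‖n₂‖²`, and the two losses order the candidate denoisers in the same way.
-/

open MeasureTheory ProbabilityTheory
open scoped InnerProductSpace

namespace ProbabilityTheory

variable {Ω E : Type*} {mΩ : MeasurableSpace Ω} {μ : Measure Ω}
  [NormedAddCommGroup E] [InnerProductSpace ℝ E] [CompleteSpace E]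
  [MeasurableSpace E] [BorelSpace E]

theorem IndepFun.integral_inner_eq_inner_integral {X Y : Ω → E} (hXY : IndepFun X Y μ)
    (hX : Integrable X μ) (hY : Integrable Y μ) :
    ∫ ω, ⟪X ω, Y ω⟫_ℝ ∂μ = ⟪μ[X], μ[Y]⟫_ℝ :=
  hXY.integral_bilin hX hY (innerSL ℝ)

theorem IndepFun.integral_norm_sub_sq [IsFiniteMeasure μ] {X Y : Ω → E} (hXY : IndepFun X Y μ)
    (hX : MemLp X 2 μ) (hY : MemLp Y 2 μ) :
    ∫ ω, ‖X ω - Y ω‖ ^ 2 ∂μ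
      = ∫ ω, ‖X ω‖ ^ 2 ∂μ - 2 * ⟪μ[X], μ[Y]⟫_ℝ + ∫ ω, ‖Y ω‖ ^ 2 ∂μ := by
  have hX2 : Integrable (fun ω ↦ ‖X ω‖ ^ 2) μ := hX.integrable_norm_pow two_ne_zero
  have hY2 : Integrable (fun ω ↦ ‖Y ω‖ ^ 2) μ := hY.integrable_norm_pow two_ne_zero
  have hX1 : Integrable X μ := hX.integrable one_le_two
  have hY1 : Integrable Y μ := hY.integrable one_le_two
  have hinner : Integrable (fun ω ↦ ⟪X ω, Y ω⟫_ℝ) μ := hXY.integrable_bilin hX1 hY1 (innerSL ℝ)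
  simp_rw [norm_sub_sq_real]
  rw [integral_add (by exact hX2.sub (hinner.const_mul 2)) hY2,
    integral_sub hX2 (hinner.const_mul 2), integral_const_mul,
    hXY.integral_inner_eq_inner_integral hX1 hY1]

theorem IndepFun.integral_norm_sub_sq_of_integral_eq_zero [IsFiniteMeasure μ] {X Y : Ω → E}
    (hXY : IndepFun X Y μ) (hX : MemLp X 2 μ) (hY : MemLp Y 2 μ) (hY₀ : μ[Y] = 0) :
    ∫ ω, ‖X ω - Y ω‖ ^ 2 ∂μ = ∫ ω, ‖X ω‖ ^ 2 ∂μ + ∫ ω, ‖Y ω‖ ^ 2 ∂μ := by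
  rw [hXY.integral_norm_sub_sq hX hY, hY₀, inner_zero_right, mul_zero, sub_zero]

end ProbabilityTheory

theorem noise2noise_identity_general
    {Ω : Type*} [MeasureSpace Ω] [IsProbabilityMeasure (ℙ : Measure Ω)] {d : ℕ}
    (x n₁ n₂ : Ω → EuclideanSpace ℝ (Fin d))
    (hx : MemLp x 2 ℙ) (hn₂ : MemLp n₂ 2 ℙ)
    (hmean : ∫ ω, n₂ ω = 0)
    (hindep : IndepFun (fun ω => (x ω, n₁ ω)) n₂ ℙ) :
    (∀ f : EuclideanSpace ℝ (Fin d) → EuclideanSpace ℝ (Fin d), Measurable f →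
        MemLp (fun ω => f (x ω + n₁ ω)) 2 ℙ →
        ∫ ω, ‖f (x ω + n₁ ω) - (x ω + n₂ ω)‖ ^ 2
          = (∫ ω, ‖f (x ω + n₁ ω) - x ω‖ ^ 2) + ∫ ω, ‖n₂ ω‖ ^ 2)
      ∧ ∀ f f' : EuclideanSpace ℝ (Fin d) → EuclideanSpace ℝ (Fin d),
          Measurable f → MemLp (fun ω => f (x ω + n₁ ω)) 2 ℙ →
          Measurable f' → MemLp (fun ω => f' (x ω + n₁ ω)) 2 ℙ →
          ((∫ ω, ‖f (x ω + n₁ ω) - (x ω + n₂ ω)‖ ^ 2)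
              ≤ ∫ ω, ‖f' (x ω + n₁ ω) - (x ω + n₂ ω)‖ ^ 2
            ↔ (∫ ω, ‖f (x ω + n₁ ω) - x ω‖ ^ 2)
              ≤ ∫ ω, ‖f' (x ω + n₁ ω) - x ω‖ ^ 2) := by
  have hloss : ∀ f : EuclideanSpace ℝ (Fin d) → EuclideanSpace ℝ (Fin d), Measurable f →
      MemLp (fun ω => f (x ω + n₁ ω)) 2 ℙ →
      ∫ ω, ‖f (x ω + n₁ ω) - (x ω + n₂ ω)‖ ^ 2
        = (∫ ω, ‖f (x ω + n₁ ω) - x ω‖ ^ 2) + ∫ ω, ‖n₂ ω‖ ^ 2 := by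
    intro f hf hfL
    have hφ : Measurable fun p : EuclideanSpace ℝ (Fin d) × EuclideanSpace ℝ (Fin d) =>
        f (p.1 + p.2) - p.1 :=
      (hf.comp (measurable_fst.add measurable_snd)).sub measurable_fst
    have hresidual : IndepFun (fun ω => f (x ω + n₁ ω) - x ω) n₂ ℙ :=
      hindep.comp hφ measurable_id
    simp only [sub_add_eq_sub_sub]
    exact hresidual.integral_norm_sub_sq_of_integral_eq_zero (hfL.sub hx) hn₂ hmean
  refine ⟨hloss, fun f f' hf hfL hf' hfL' => ?_⟩
  rw [hloss f hf hfL, hloss f' hf' hfL', add_le_add_iff_right]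

/-- Noise2Noise: `y₁ = x + n₁`, `y₂ = x + n₂`, with `n₂` mean-zero and
independent of `(x, n₁)`.  For any measurable `f` (with square-integrable output),
`E[‖f(y₁) − y₂‖²] = E[‖f(y₁) − x‖²] + E[‖n₂‖²]`; in particular minimizing the
Noise2Noise loss yields the same minimizer as the supervised loss. -/
theorem noise2noise_identity
    {Ω : Type*} [MeasureSpace Ω] [IsProbabilityMeasure (ℙ : Measure Ω)] {d : ℕ}
    (x n₁ n₂ : Ω → EuclideanSpace ℝ (Fin d))
    (hx : MemLp x 2 ℙ) (hn₁ : MemLp n₁ 2 ℙ) (hn₂ : MemLp n₂ 2 ℙ)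
    (hmean : ∫ ω, n₂ ω = 0)
    (hindep : IndepFun (fun ω => (x ω, n₁ ω)) n₂ ℙ) :
    (∀ f : EuclideanSpace ℝ (Fin d) → EuclideanSpace ℝ (Fin d), Measurable f →
        MemLp (fun ω => f (x ω + n₁ ω)) 2 ℙ →
        ∫ ω, ‖f (x ω + n₁ ω) - (x ω + n₂ ω)‖ ^ 2
          = (∫ ω, ‖f (x ω + n₁ ω) - x ω‖ ^ 2) + ∫ ω, ‖n₂ ω‖ ^ 2)
      ∧ ∀ f f' : EuclideanSpace ℝ (Fin d) → EuclideanSpace ℝ (Fin d),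
          Measurable f → MemLp (fun ω => f (x ω + n₁ ω)) 2 ℙ →
          Measurable f' → MemLp (fun ω => f' (x ω + n₁ ω)) 2 ℙ →
          ((∫ ω, ‖f (x ω + n₁ ω) - (x ω + n₂ ω)‖ ^ 2)
              ≤ ∫ ω, ‖f' (x ω + n₁ ω) - (x ω + n₂ ω)‖ ^ 2
            ↔ (∫ ω, ‖f (x ω + n₁ ω) - x ω‖ ^ 2)
              ≤ ∫ ω, ‖f' (x ω + n₁ ω) - x ω‖ ^ 2) :=
  noise2noise_identity_general x n₁ n₂ hx hn₂ hmean hindep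
end
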